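/- arXiv:0908.3392 — 3 statements merged into one kernel-verified Lean document; each statement's English description precedes it below -/
import Mathlib

section
/- Let k ≥ 1 and X ∈ 𝒳^{4k}_{η}, and let w₁ ≥ 2 and w₂ ≤ 1/2. Then there exists a numerical constant C_k > 0 depending only on k such that for every n ≥ 1: sup_{j≥1} P( λ̂_j/λ_j ≥ w₁ ) ≤ C_k·η·n^{−k} and sup_{j≥1} P( λ̂_j/λ_j < w₂ ) ≤ C_k·η·n^{−k}, where λ̂_j := n⁻¹Σ_{i=1}^n [Xᵢ]_j². -/
/-!
Write `λ̂_j/λ_j - 1 = n⁻¹ ∑_{i<n} ξ_i` with `ξ_i = [X_i]_j²/λ_j - 1`: the `ξ_i` are independent,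
centred, and `E|ξ_i|^{2k} ≤ E|[X]_j/√λ_j|^{4k} + 1 ≤ 2η`. Both deviation events force
`|∑ ξ_i| ≥ n/2`, so by Markov's inequality for the `2k`-th moment it suffices to show
`E(∑ ξ_i)^{2k} ≤ n^k k^{2k} · 2η`. Expanding the power over maps `g : Fin (2k) → range n`, the term
`E ∏_t ξ_{g t}` vanishes as soon as some index is hit exactly once; the remaining `g` take at most
`k` values, so there are at most `n^k k^{2k}` of them, and by AM-GM each term is at most
`max_i E|ξ_i|^{2k}`.
-/

open Filter Real

noncomputable section

namespace CircularFLM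

/-- A circular functional linear model, described through the Fourier coefficients of the
regressor with respect to the trigonometric basis of `L²[0,1]` (indices `j ≥ 1`), together
with an infinite i.i.d. sequence of copies `(ε_i, X_i)` generating the sample
`(Y_i, X_i)` with `Y_i = ⟨β, X_i⟩ + σ ε_i`.  `Xc i j ω` is the `j`-th Fourier coefficient
`[X_i]_j` of the `i`-th copy of the regressor. -/
structure Model where
  Ω : Type
  [mΩ : MeasurableSpace Ω]
  P : MeasureTheory.Measure Ω
  [probP : MeasureTheory.IsProbabilityMeasure P]
  σ : ℝ
  σ_pos : 0 < σ
  /-- the eigenvalues `λ_j = E [X]_j²`, `j ≥ 1`, of the covariance operator -/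
  lam : ℕ → ℝ
  lam_pos : ∀ j, 1 ≤ j → 0 < lam j
  lam_tendsto_zero : Tendsto lam atTop (nhds (0 : ℝ))
  Xc : ℕ → ℕ → Ω → ℝ
  meas_Xc : ∀ i j, Measurable (Xc i j)
  eps : ℕ → Ω → ℝ
  meas_eps : ∀ i, Measurable (eps i)
  /-- `X` is centered -/
  Xc_centered : ∀ j, 1 ≤ j → ∫ ω, Xc 0 j ω ∂P = 0
  /-- second-order stationarity: the Fourier coefficients have variances `λ_j` ... -/
  Xc_var : ∀ j, 1 ≤ j → ∫ ω, (Xc 0 j ω) ^ 2 ∂P = lam j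
  /-- ... and are uncorrelated -/
  Xc_uncorr : ∀ j k, 1 ≤ j → 1 ≤ k → j ≠ k → ∫ ω, Xc 0 j ω * Xc 0 k ω ∂P = 0
  /-- `E‖X‖² < ∞` -/
  X_sq_int : MeasureTheory.Integrable (fun ω => ∑' j : ℕ, (Xc 0 (j + 1) ω) ^ 2) P
  /-- the error is centered with variance one ... -/
  eps_centered : ∫ ω, eps 0 ω ∂P = 0
  eps_var : ∫ ω, (eps 0 ω) ^ 2 ∂P = 1
  /-- ... and uncorrelated with the regressor -/
  eps_uncorr : ∀ j, 1 ≤ j → ∫ ω, eps 0 ω * Xc 0 j ω ∂P = 0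
  /-- the copies `(ε_i, X_i)` are independent ... -/
  iid_indep : ProbabilityTheory.iIndepFun
    (fun i ω => ((eps i ω : ℝ), fun j => Xc i j ω)) P
  /-- ... and identically distributed -/
  iid_ident : ∀ i : ℕ,
    MeasureTheory.Measure.map (fun ω => ((eps i ω : ℝ), fun j => Xc i j ω)) P
      = MeasureTheory.Measure.map (fun ω => ((eps 0 ω : ℝ), fun j => Xc 0 j ω)) P

open MeasureTheory ProbabilityTheory

attribute [instance] Model.mΩ Model.probP

/-- the response `Y_i = ⟨β, X_i⟩ + σ ε_i` for slope Fourier coefficients `b` -/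
def Model.Y (M : Model) (b : ℕ → ℝ) (i : ℕ) (ω : M.Ω) : ℝ :=
  (∑' j : ℕ, b (j + 1) * M.Xc i (j + 1) ω) + M.σ * M.eps i ω

/-- `σ_Y² = Var(Y)` -/
def Model.varY (M : Model) (b : ℕ → ℝ) : ℝ := variance (M.Y b 0) M.P

/-- `E‖X‖²` -/
def Model.EX2 (M : Model) : ℝ := ∫ ω, ∑' j : ℕ, (M.Xc 0 (j + 1) ω) ^ 2 ∂M.P

/-- `X ∈ 𝒳ᵏ_η`, i.e. `sup_j E|[X]_j/√λ_j|ᵏ ≤ η` -/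
def Model.momX (M : Model) (k : ℕ) (η : ℝ) : Prop :=
  ∀ j, 1 ≤ j → Integrable (fun ω => |M.Xc 0 j ω / Real.sqrt (M.lam j)| ^ k) M.P ∧
    ∫ ω, |M.Xc 0 j ω / Real.sqrt (M.lam j)| ^ k ∂M.P ≤ η

/-- `E|Y/σ_Y|ᵏ ≤ η` -/
def Model.momY (M : Model) (b : ℕ → ℝ) (k : ℕ) (η : ℝ) : Prop :=
  Integrable (fun ω => |M.Y b 0 ω / Real.sqrt (M.varY b)| ^ k) M.P ∧
    ∫ ω, |M.Y b 0 ω / Real.sqrt (M.varY b)| ^ k ∂M.P ≤ η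

/-- the series `⟨β, X_i⟩ = Σ_j [β]_j [X_i]_j` converges almost surely -/
def Model.innerSummable (M : Model) (b : ℕ → ℝ) : Prop :=
  ∀ i, ∀ᵐ ω ∂M.P, Summable (fun j : ℕ => b (j + 1) * M.Xc i (j + 1) ω)

/-- `[ĝ]_j = n⁻¹ Σ_i Y_i [X_i]_j` -/
def Model.ghat (M : Model) (b : ℕ → ℝ) (n j : ℕ) (ω : M.Ω) : ℝ :=
  (n : ℝ)⁻¹ * ∑ i ∈ Finset.range n, M.Y b i ω * M.Xc i j ω

/-- `λ̂_j = n⁻¹ Σ_i [X_i]_j²` -/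
def Model.lamhat (M : Model) (n j : ℕ) (ω : M.Ω) : ℝ :=
  (n : ℝ)⁻¹ * ∑ i ∈ Finset.range n, (M.Xc i j ω) ^ 2

/-- the `j`-th coefficient of `Φ̂_ĝ`, i.e. `([ĝ]_j/λ̂_j)·1{λ̂_j ≥ 1/n}` -/
def Model.phiGhat (M : Model) (b : ℕ → ℝ) (n j : ℕ) (ω : M.Ω) : ℝ :=
  if 1 / (n : ℝ) ≤ M.lamhat n j ω then M.ghat b n j ω / M.lamhat n j ω else 0

/-- the `j`-th coefficient of the orthogonal series estimator `β̂_m` -/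
def Model.bhat (M : Model) (b : ℕ → ℝ) (n m j : ℕ) (ω : M.Ω) : ℝ :=
  if 1 ≤ j ∧ j ≤ m then M.phiGhat b n j ω else 0

/-- the contrast `Υ(t) = ‖t‖²_ω − 2⟨t, Φ̂_ĝ⟩_ω` of a coefficient sequence `t` -/
def Model.contrast (M : Model) (w b : ℕ → ℝ) (n : ℕ) (t : ℕ → ℝ) (ω : M.Ω) : ℝ :=
  (∑' j : ℕ, w (j + 1) * t (j + 1) ^ 2)
    - 2 * ∑' j : ℕ, w (j + 1) * t (j + 1) * M.phiGhat b n (j + 1) ω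

/-- the penalty `pen(m) = 192 σ_Y² η δ_m / n` -/
def Model.pen (M : Model) (b : ℕ → ℝ) (η : ℝ) (δ : ℕ → ℝ) (n m : ℕ) : ℝ :=
  192 * M.varY b * η * δ m / n

/-- the `𝓕_ω`-risk `E‖β̂_{m̂} − β‖²_ω` of the estimator with (data-driven) dimension `mhat` -/
def Model.risk (M : Model) (w b : ℕ → ℝ) (n : ℕ) (mhat : M.Ω → ℕ) : ℝ :=
  ∫ ω, ∑' j : ℕ, w (j + 1) * (M.bhat b n (mhat ω) (j + 1) ω - b (j + 1)) ^ 2 ∂M.P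

/-- `β ∈ 𝓕ʳ_γ`, the ellipsoid `‖β‖²_γ ≤ r` -/
def inEllipsoid (γ : ℕ → ℝ) (r : ℝ) (b : ℕ → ℝ) : Prop :=
  Summable (fun j : ℕ => γ (j + 1) * b (j + 1) ^ 2) ∧
    ∑' j : ℕ, γ (j + 1) * b (j + 1) ^ 2 ≤ r

/-- Assumption 1 on the weight sequences `ω` (here `w`) and `γ` -/
def Assumption1 (w γ : ℕ → ℝ) : Prop :=
  (∀ j, 1 ≤ j → 0 < w j) ∧ (∀ j, 1 ≤ j → 0 < γ j) ∧ w 1 = 1 ∧ γ 1 = 1 ∧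
    (∀ j k, 1 ≤ j → j ≤ k → (γ k)⁻¹ ≤ (γ j)⁻¹) ∧
    Tendsto (fun j => (γ j)⁻¹) atTop (nhds (0 : ℝ)) ∧
    (∀ j k, 1 ≤ j → j ≤ k → w k / γ k ≤ w j / γ j) ∧
    Tendsto (fun j => w j / γ j) atTop (nhds (0 : ℝ))

/-- `M_n = argmax{1 ≤ M ≤ n : δ_M ≤ δ_1 n min(ω_M, 1)}` -/
def Mseq (w δ : ℕ → ℝ) (n : ℕ) : ℕ :=
  sSup {M : ℕ | 1 ≤ M ∧ M ≤ n ∧ δ M ≤ δ 1 * n * min (w M) 1}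

/-- `N_n = argmax{1 ≤ N ≤ n : max_{1≤j≤N} ω_j ≤ n}` -/
def Nseq (w : ℕ → ℝ) (n : ℕ) : ℕ :=
  sSup {N : ℕ | 1 ≤ N ∧ N ≤ n ∧ ∀ j, 1 ≤ j → j ≤ N → w j ≤ n}

/-- Assumption 2 on the sequences `δ`, `Δ` and `M = (M_n)` (relative to `λ` and `ω`) -/
def Assumption2 (lam w δ Δ : ℕ → ℝ) (Sig : ℝ) : Prop :=
  (∀ j k, 1 ≤ j → j ≤ k → δ j ≤ δ k) ∧ (∀ j k, 1 ≤ j → j ≤ k → Δ j ≤ Δ k) ∧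
    (∀ m, 1 ≤ m → ∑ j ∈ Finset.Icc 1 m, w j / lam j ≤ δ m) ∧
    (∀ m, 1 ≤ m → ∀ j, 1 ≤ j → j ≤ m → w j / lam j ≤ Δ m) ∧
    Summable (fun m : ℕ => Δ (m + 1) * Real.exp (-δ (m + 1) / (6 * Δ (m + 1)))) ∧
    (∑' m : ℕ, Δ (m + 1) * Real.exp (-δ (m + 1) / (6 * Δ (m + 1)))) ≤ Sig ∧
    (∀ n : ℕ, 1 ≤ n → ∀ j, 1 ≤ j → j ≤ Mseq w δ n → 2 / (n : ℝ) ≤ lam j)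

/-- `m̂` is a minimizer of the penalized contrast over `{1, …, Mn}` -/
def Model.IsSelection (M : Model) (w b δ : ℕ → ℝ) (η : ℝ) (n Mn : ℕ)
    (mhat : M.Ω → ℕ) : Prop :=
  Measurable mhat ∧ ∀ ω, (1 ≤ mhat ω ∧ mhat ω ≤ Mn) ∧
    ∀ m, 1 ≤ m → m ≤ Mn →
      M.contrast w b n (fun j => M.bhat b n (mhat ω) j ω) ω + M.pen b η δ n (mhat ω)
        ≤ M.contrast w b n (fun j => M.bhat b n m j ω) ω + M.pen b η δ n m

/-- `max_{1 ≤ j ≤ m} f j` -/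
def maxIcc (f : ℕ → ℝ) (m : ℕ) : ℝ := sSup (f '' Set.Icc 1 m)

/-- the intrinsic choice `Δ_m = max_{1≤j≤m} ω_j/λ_j` -/
def intrinsicDelta (lam w : ℕ → ℝ) (m : ℕ) : ℝ := maxIcc (fun j => w j / lam j) m

/-- the intrinsic `κ_m = max_{1≤j≤m} max(ω_j,1)/λ_j` -/
def intrinsicKappa (lam w : ℕ → ℝ) (m : ℕ) : ℝ := maxIcc (fun j => max (w j) 1 / lam j) m

/-- the intrinsic choice `δ_m = m Δ_m log(κ_m ∨ (m+2)) / log(m+2)` -/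
def intrinsicdelta (lam w : ℕ → ℝ) (m : ℕ) : ℝ :=
  (m : ℝ) * intrinsicDelta lam w m
    * (Real.log (max (intrinsicKappa lam w m) ((m : ℝ) + 2)) / Real.log ((m : ℝ) + 2))

/-- the estimated `Δ̂_m` -/
def Model.Deltahat (M : Model) (w : ℕ → ℝ) (n m : ℕ) (ω : M.Ω) : ℝ :=
  maxIcc (fun j => if 1 / (n : ℝ) ≤ M.lamhat n j ω then w j / M.lamhat n j ω else 0) m

/-- the estimated `κ̂_m` -/
def Model.kappahat (M : Model) (w : ℕ → ℝ) (n m : ℕ) (ω : M.Ω) : ℝ :=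
  maxIcc (fun j => if 1 / (n : ℝ) ≤ M.lamhat n j ω then max (w j) 1 / M.lamhat n j ω else 0) m

/-- the estimated `δ̂_m` -/
def Model.deltahat (M : Model) (w : ℕ → ℝ) (n m : ℕ) (ω : M.Ω) : ℝ :=
  (m : ℝ) * M.Deltahat w n m ω
    * (Real.log (max (M.kappahat w n m ω) ((m : ℝ) + 2)) / Real.log ((m : ℝ) + 2))

/-- the random penalty `p̂en(m) = 1920 σ_Y² η δ̂_m / n` -/
def Model.penhat (M : Model) (w b : ℕ → ℝ) (η : ℝ) (n m : ℕ) (ω : M.Ω) : ℝ :=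
  1920 * M.varY b * η * M.deltahat w n m ω / n

/-- the random upper bound `M̂_n = argmax{1 ≤ M ≤ N_n : λ̂_M/(M max(ω_M,1)) ≥ (log n)/n}` -/
def Model.MhatSeq (M : Model) (w : ℕ → ℝ) (n : ℕ) (ω : M.Ω) : ℕ :=
  sSup {Mm : ℕ | 1 ≤ Mm ∧ Mm ≤ Nseq w n ∧
    Real.log n / n ≤ M.lamhat n Mm ω / (Mm * max (w Mm) 1)}

/-- `m̂` is a minimizer of the fully data-driven penalized contrast over `{1, …, M̂_n}` -/
def Model.IsSelectionRand (M : Model) (w b : ℕ → ℝ) (η : ℝ) (n : ℕ)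
    (mhat : M.Ω → ℕ) : Prop :=
  Measurable mhat ∧ ∀ ω, (1 ≤ mhat ω ∧ mhat ω ≤ M.MhatSeq w n ω) ∧
    ∀ m, 1 ≤ m → m ≤ M.MhatSeq w n ω →
      M.contrast w b n (fun j => M.bhat b n (mhat ω) j ω) ω + M.penhat w b η n (mhat ω) ω
        ≤ M.contrast w b n (fun j => M.bhat b n m j ω) ω + M.penhat w b η n m ω

/-- Assumption 3 on `M = (M_n)`, `m† = (m†_n)` and `N = (N_n)` for the intrinsic sequences -/
def Assumption3 (lam w γ : ℕ → ℝ) (mdag : ℕ → ℕ) (ς : ℝ) : Prop :=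
  (∀ n : ℕ, 1 ≤ n → ∀ j, 1 ≤ j → j ≤ Mseq w (intrinsicdelta lam w) n → 2 / (n : ℝ) ≤ lam j) ∧
    (∀ n : ℕ, 1 ≤ n → ∀ m : ℕ, Mseq w (intrinsicdelta lam w) n < m →
      lam m / (m * max (w m) 1) ≤ Real.log n / (2 * n)) ∧
    1 ≤ ς ∧
    (∀ n : ℕ, 1 ≤ n → 1 ≤ mdag n ∧
      ς⁻¹ ≤ γ (mdag n) * intrinsicdelta lam w (mdag n) / (n * w (mdag n)) ∧
      γ (mdag n) * intrinsicdelta lam w (mdag n) / (n * w (mdag n)) ≤ ς) ∧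
    (∀ n : ℕ, 1 ≤ n → ∀ m, 1 ≤ m → m ≤ mdag n →
      2 * Real.log n / n ≤ lam m / (m * max (w m) 1)) ∧
    (∀ n : ℕ, 1 ≤ n → Mseq w (intrinsicdelta lam w) n ≤ Nseq w n ∧ Nseq w n ≤ n)

/-- `sup_{t ∈ B_m} |⟨t, v⟩_ω|²` where `v` is (the coefficient sequence of) a function and
`B_m` is the unit ball of `span(φ_1,…,φ_m)` w.r.t. `‖·‖_ω`  -/
def ballSup (w : ℕ → ℝ) (m : ℕ) (v : ℕ → ℝ) : ℝ :=
  sSup {x : ℝ | ∃ c : ℕ → ℝ, (∑ j ∈ Finset.Icc 1 m, w j * c j ^ 2) ≤ 1 ∧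
    x = |∑ j ∈ Finset.Icc 1 m, w j * c j * v j| ^ 2}

/-- the event `Ω_{Y_i, X_i}` -/
def Model.goodEvent (M : Model) (b w δ : ℕ → ℝ) (n i : ℕ) : Set M.Ω :=
  {ω | |M.Y b i ω / Real.sqrt (M.varY b)| ≤ (n : ℝ) ^ ((1 : ℝ) / 6) ∧
    ∀ j, 1 ≤ j → j ≤ Mseq w δ n → |M.Xc i j ω / Real.sqrt (M.lam j)| ≤ (n : ℝ) ^ ((1 : ℝ) / 6)}

/-- the Fourier coefficients `[ĥ]_j` -/
def Model.hhat (M : Model) (b w δ : ℕ → ℝ) (n j : ℕ) (ω : M.Ω) : ℝ :=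
  (n : ℝ)⁻¹ * ∑ i ∈ Finset.range n,
    ((M.goodEvent b w δ n i).indicator (fun ω' => M.Y b i ω' * M.Xc i j ω') ω
      - ∫ ω', (M.goodEvent b w δ n i).indicator (fun ω' => M.Y b i ω' * M.Xc i j ω') ω' ∂M.P)

/-- the Fourier coefficients `[f̂]_j` -/
def Model.fhat (M : Model) (b w δ : ℕ → ℝ) (n j : ℕ) (ω : M.Ω) : ℝ :=
  (n : ℝ)⁻¹ * ∑ i ∈ Finset.range n,
    ((M.goodEvent b w δ n i)ᶜ.indicator (fun ω' => M.Y b i ω' * M.Xc i j ω') ω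
      - ∫ ω', (M.goodEvent b w δ n i)ᶜ.indicator (fun ω' => M.Y b i ω' * M.Xc i j ω') ω' ∂M.P)

end CircularFLM

open MeasureTheory ProbabilityTheory Finset

lemma abs_sq_sub_one_pow_le (a : ℝ) (m : ℕ) : |a ^ 2 - 1| ^ m ≤ |a| ^ (2 * m) + 1 := by
  rcases le_total (a ^ 2) 1 with ha | ha
  · have h : |a ^ 2 - 1| ≤ 1 := by rw [abs_le]; constructor <;> nlinarith [sq_nonneg a]
    have := pow_le_one₀ (abs_nonneg _) h (n := m)
    have : 0 ≤ |a| ^ (2 * m) := by positivity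
    linarith
  · have h : |a ^ 2 - 1| ≤ a ^ 2 := by rw [abs_of_nonneg (by linarith)]; linarith
    calc |a ^ 2 - 1| ^ m ≤ (a ^ 2) ^ m := pow_le_pow_left₀ (abs_nonneg _) h m
      _ = |a| ^ (2 * m) := by rw [← sq_abs, ← pow_mul]
      _ ≤ |a| ^ (2 * m) + 1 := le_add_of_nonneg_right zero_le_one

lemma prod_abs_le_sum_abs_pow_div {α : Type*} [Fintype α] [Nonempty α] (x : α → ℝ) :
    ∏ t, |x t| ≤ (∑ t, |x t| ^ Fintype.card α) / Fintype.card α := by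
  have hp : Fintype.card α ≠ 0 := Fintype.card_ne_zero
  have h := Real.geom_mean_le_arith_mean_weighted univ (fun _ => (Fintype.card α : ℝ)⁻¹)
    (fun t => |x t| ^ Fintype.card α) (fun _ _ => by positivity) (by simp [hp])
    (fun _ _ => by positivity)
  simp only [Real.pow_rpow_inv_natCast (abs_nonneg _) hp] at h
  rwa [sum_div, sum_congr rfl fun t _ => div_eq_inv_mul _ _]

namespace Finset

lemma two_mul_card_image_le_card {α ι : Type*} [Fintype α] [DecidableEq ι] (g : α → ι)
    (hg : ∀ v, #{t | g t = v} ≠ 1) : 2 * #(univ.image g) ≤ Fintype.card α := by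
  refine mul_card_image_le_card univ 2 fun v hv => ?_
  obtain ⟨t, -, rfl⟩ := mem_image.1 hv
  have : 0 < #{s | g s = g t} := card_pos.2 ⟨t, by simp⟩
  have := hg (g t)
  omega

lemma card_filter_card_image_le {α ι : Type*} [Fintype α] [DecidableEq α] [Nonempty α]
    [DecidableEq ι] (s : Finset ι) (k : ℕ) :
    #{g ∈ Fintype.piFinset (fun _ : α => s) | #(univ.image g) ≤ k}
      ≤ #s ^ k * k ^ Fintype.card α := by
  -- such a `g` is `e ∘ c`, where `e : Fin k → s` lists the image of `g` and `c` indexes into it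
  calc _ ≤ #((Fintype.piFinset (fun _ : Fin k => s) ×ˢ (univ : Finset (α → Fin k))).image
          fun ec => ec.1 ∘ ec.2) := by
        refine card_le_card fun g hg => ?_
        rw [mem_filter, Fintype.mem_piFinset] at hg
        obtain ⟨hgs, hcard⟩ := hg
        set l := (univ.image g).toList
        have hl : l.length ≤ k := by rwa [length_toList]
        have hidx t : l.idxOf (g t) < l.length := List.idxOf_lt_length_iff.2 (by simp [l])
        refine mem_image.2 ⟨(fun i => if h : (i : ℕ) < l.length then l[i]
          else g (Classical.arbitrary α), fun t => ⟨l.idxOf (g t), (hidx t).trans_le hl⟩), ?_, ?_⟩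
        · simp only [mem_product, Fintype.mem_piFinset, mem_univ, and_true]
          intro i
          split_ifs with h
          · obtain ⟨t, -, ht⟩ := mem_image.1 (mem_toList.1 (List.getElem_mem h))
            exact ht ▸ hgs t
          · exact hgs _
        · funext t
          simp [hidx t]
    _ ≤ _ := card_image_le.trans (by simp [card_product, Fintype.card_piFinset])

end Finset

namespace MeasureTheory

variable {Ω ι : Type*} [MeasurableSpace Ω] {μ : Measure Ω} {ξ : ι → Ω → ℝ}

lemma integrable_prod_comp {α : Type*} [Fintype α] [Nonempty α]
    (hmeas : ∀ i, AEStronglyMeasurable (ξ i) μ)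
    (hint : ∀ i, Integrable (fun ω => |ξ i ω| ^ Fintype.card α) μ) (g : α → ι) :
    Integrable (fun ω => ∏ t, ξ (g t) ω) μ := by
  refine ((integrable_finsetSum univ fun t _ => hint (g t)).div_const (Fintype.card α : ℝ)).mono'
    (Finset.aestronglyMeasurable_fun_prod univ fun t _ => hmeas (g t)) (ae_of_all _ fun ω => ?_)
  rw [Real.norm_eq_abs, abs_prod]
  exact prod_abs_le_sum_abs_pow_div _

lemma integral_prod_comp_le {α : Type*} [Fintype α] [Nonempty α]
    (hmeas : ∀ i, AEStronglyMeasurable (ξ i) μ)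
    (hint : ∀ i, Integrable (fun ω => |ξ i ω| ^ Fintype.card α) μ) {B : ℝ}
    (hmom : ∀ i, ∫ ω, |ξ i ω| ^ Fintype.card α ∂μ ≤ B) (g : α → ι) :
    ∫ ω, ∏ t, ξ (g t) ω ∂μ ≤ B := by
  have hp : (0 : ℝ) < Fintype.card α := by exact_mod_cast Fintype.card_pos
  calc ∫ ω, ∏ t, ξ (g t) ω ∂μ ≤ ∫ ω, |∏ t, ξ (g t) ω| ∂μ :=
        integral_mono (integrable_prod_comp hmeas hint g) (integrable_prod_comp hmeas hint g).abs
          fun ω => le_abs_self _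
    _ ≤ ∫ ω, (∑ t, |ξ (g t) ω| ^ Fintype.card α) / Fintype.card α ∂μ :=
        integral_mono (integrable_prod_comp hmeas hint g).abs
          ((integrable_finsetSum univ fun t _ => hint (g t)).div_const _)
          fun ω => (abs_prod _ _).trans_le (prod_abs_le_sum_abs_pow_div _)
    _ = (∑ t, ∫ ω, |ξ (g t) ω| ^ Fintype.card α ∂μ) / Fintype.card α := by
        rw [integral_div, integral_finsetSum univ fun t _ => hint (g t)]
    _ ≤ (∑ _t : α, B) / Fintype.card α := by gcongr with t; exact hmom (g t)
    _ = B := by rw [sum_const, card_univ, nsmul_eq_mul, mul_div_cancel_left₀ _ hp.ne']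

lemma integrable_sum_pow (hmeas : ∀ i, AEStronglyMeasurable (ξ i) μ) {p : ℕ} (hp : p ≠ 0)
    (hint : ∀ i, Integrable (fun ω => |ξ i ω| ^ p) μ) (s : Finset ι) :
    Integrable (fun ω => (∑ i ∈ s, ξ i ω) ^ p) μ := by
  have : Nonempty (Fin p) := ⟨⟨0, Nat.pos_of_ne_zero hp⟩⟩
  simp_rw [sum_pow']
  exact integrable_finsetSum _ fun g _ => integrable_prod_comp hmeas (by simpa using hint) g

lemma measureReal_le_abs_le_integral_pow_div [IsFiniteMeasure μ] {f : Ω → ℝ} {k : ℕ}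
    (hf : Integrable (fun ω => f ω ^ (2 * k)) μ) {ε : ℝ} (hε : 0 < ε) :
    μ.real {ω | ε ≤ |f ω|} ≤ (∫ ω, f ω ^ (2 * k) ∂μ) / ε ^ (2 * k) := by
  rw [le_div_iff₀ (by positivity), mul_comm]
  refine le_trans ?_ (mul_meas_ge_le_integral_of_nonneg
    (ae_of_all _ fun ω => (even_two_mul k).pow_nonneg (f ω)) hf (ε ^ (2 * k)))
  refine mul_le_mul_of_nonneg_left (measureReal_mono fun ω hω => ?_) (by positivity)
  show ε ^ (2 * k) ≤ f ω ^ (2 * k)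
  rw [← (even_two_mul k).pow_abs (f ω)]
  exact pow_le_pow_left₀ hε.le hω _

end MeasureTheory

namespace ProbabilityTheory

variable {Ω ι : Type*} [MeasurableSpace Ω] {μ : Measure Ω} {ξ : ι → Ω → ℝ}

lemma iIndepFun.integral_finset_prod_pow (hξ : iIndepFun ξ μ)
    (hmeas : ∀ i, AEMeasurable (ξ i) μ) (s : Finset ι) (m : ι → ℕ) :
    ∫ ω, ∏ i ∈ s, ξ i ω ^ m i ∂μ = ∏ i ∈ s, ∫ ω, ξ i ω ^ m i ∂μ := by
  have h := iIndepFun.integral_fun_prod_comp (X := fun i : s => ξ i)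
    (hξ.precomp Subtype.val_injective) (f := fun i x => x ^ m i) (fun i => hmeas i)
    (fun i => (continuous_pow _).aestronglyMeasurable)
  calc ∫ ω, ∏ i ∈ s, ξ i ω ^ m i ∂μ = ∫ ω, ∏ i : s, ξ i ω ^ m i ∂μ := by
        congr 1
        funext ω
        exact (prod_coe_sort s fun i => ξ i ω ^ m i).symm
    _ = ∏ i : s, ∫ ω, ξ i ω ^ m i ∂μ := h
    _ = ∏ i ∈ s, ∫ ω, ξ i ω ^ m i ∂μ := prod_coe_sort s fun i => ∫ ω, ξ i ω ^ m i ∂μ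

lemma iIndepFun.integral_prod_eq_zero_of_card_fiber_eq_one {α : Type*} [Fintype α]
    [DecidableEq ι] (hξ : iIndepFun ξ μ) (hmeas : ∀ i, AEMeasurable (ξ i) μ)
    (hmean : ∀ i, ∫ ω, ξ i ω ∂μ = 0) (g : α → ι) {v : ι} (hv : #{t | g t = v} = 1) :
    ∫ ω, ∏ t, ξ (g t) ω ∂μ = 0 := by
  have hfiber ω : ∏ t, ξ (g t) ω = ∏ i ∈ univ.image g, ξ i ω ^ #{t | g t = i} :=
    prod_comp (fun i => ξ i ω) g
  simp_rw [hfiber]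
  rw [hξ.integral_finset_prod_pow hmeas]
  obtain ⟨t, ht⟩ := card_eq_one.1 hv
  have hgt : g t = v := by simpa using (Finset.ext_iff.1 ht t).2 (mem_singleton_self t)
  exact prod_eq_zero (mem_image.2 ⟨t, mem_univ t, hgt⟩) (by simp [hv, hmean])

theorem iIndepFun.integral_sum_pow_le [DecidableEq ι] (hξ : iIndepFun ξ μ)
    (hmeas : ∀ i, AEMeasurable (ξ i) μ) (hmean : ∀ i, ∫ ω, ξ i ω ∂μ = 0) {k : ℕ} (hk : k ≠ 0)
    (hint : ∀ i, Integrable (fun ω => |ξ i ω| ^ (2 * k)) μ) {B : ℝ}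
    (hmom : ∀ i, ∫ ω, |ξ i ω| ^ (2 * k) ∂μ ≤ B) (s : Finset ι) :
    ∫ ω, (∑ i ∈ s, ξ i ω) ^ (2 * k) ∂μ ≤ #s ^ k * k ^ (2 * k) * B := by
  rcases s.eq_empty_or_nonempty with rfl | ⟨i₀, -⟩
  · simp [hk]
  have hB : 0 ≤ B := (integral_nonneg fun ω => by positivity).trans (hmom i₀)
  have : Nonempty (Fin (2 * k)) := ⟨⟨0, by omega⟩⟩
  have hmeas' i := (hmeas i).aestronglyMeasurable
  have hint' : ∀ i, Integrable (fun ω => |ξ i ω| ^ Fintype.card (Fin (2 * k))) μ := by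
    simpa using hint
  have hmom' : ∀ i, ∫ ω, |ξ i ω| ^ Fintype.card (Fin (2 * k)) ∂μ ≤ B := by simpa using hmom
  have hsmall : ∀ g ∈ Fintype.piFinset fun _ : Fin (2 * k) => s,
      ∫ ω, ∏ t, ξ (g t) ω ∂μ ≠ 0 → #(univ.image g) ≤ k := fun g _ hg => by
    have := two_mul_card_image_le_card g fun v hv =>
      hg (hξ.integral_prod_eq_zero_of_card_fiber_eq_one hmeas hmean g hv)
    simp only [Fintype.card_fin] at this
    omega
  calc ∫ ω, (∑ i ∈ s, ξ i ω) ^ (2 * k) ∂μ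
      = ∑ g ∈ Fintype.piFinset (fun _ : Fin (2 * k) => s), ∫ ω, ∏ t, ξ (g t) ω ∂μ := by
        simp_rw [sum_pow']
        exact integral_finsetSum _ fun g _ => integrable_prod_comp hmeas' hint' g
    _ = ∑ g ∈ Fintype.piFinset (fun _ : Fin (2 * k) => s) with #(univ.image g) ≤ k,
          ∫ ω, ∏ t, ξ (g t) ω ∂μ := (sum_filter_of_ne hsmall).symm
    _ ≤ ∑ g ∈ Fintype.piFinset (fun _ : Fin (2 * k) => s) with #(univ.image g) ≤ k, B :=
        sum_le_sum fun g _ => integral_prod_comp_le hmeas' hint' hmom' g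
    _ ≤ #s ^ k * k ^ (2 * k) * B := by
        rw [sum_const, nsmul_eq_mul]
        gcongr
        exact_mod_cast (card_filter_card_image_le s k).trans_eq (by rw [Fintype.card_fin])

end ProbabilityTheory

namespace CircularFLM

open MeasureTheory ProbabilityTheory Finset

def Model.sqDev (M : Model) (j i : ℕ) (ω : M.Ω) : ℝ := M.Xc i j ω ^ 2 / M.lam j - 1

lemma Model.identDistrib_Xc (M : Model) (i j : ℕ) :
    IdentDistrib (M.Xc i j) (M.Xc 0 j) M.P M.P := by
  have hmeas l : Measurable fun ω => (M.eps l ω, fun j => M.Xc l j ω) :=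
    (M.meas_eps l).prodMk (measurable_pi_lambda _ fun j => M.meas_Xc l j)
  have h : IdentDistrib (fun ω => (M.eps i ω, fun j => M.Xc i j ω))
      (fun ω => (M.eps 0 ω, fun j => M.Xc 0 j ω)) M.P M.P :=
    ⟨(hmeas i).aemeasurable, (hmeas 0).aemeasurable, M.iid_ident i⟩
  exact h.comp ((measurable_pi_apply j).comp measurable_snd)

lemma Model.iIndepFun_sqDev (M : Model) (j : ℕ) : iIndepFun (M.sqDev j) M.P :=
  M.iid_indep.comp (fun _ q => q.2 j ^ 2 / M.lam j - 1) fun _ => by fun_prop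

lemma Model.measurable_sqDev (M : Model) (j i : ℕ) : Measurable (M.sqDev j i) :=
  (((M.meas_Xc i j).pow_const 2).div_const _).sub_const 1

lemma Model.identDistrib_sqDev (M : Model) (j i : ℕ) :
    IdentDistrib (M.sqDev j i) (M.sqDev j 0) M.P M.P :=
  (M.identDistrib_Xc i j).comp (u := fun x => x ^ 2 / M.lam j - 1) (by fun_prop)

lemma Model.integral_sqDev (M : Model) {j : ℕ} (hj : 1 ≤ j) (i : ℕ) :
    ∫ ω, M.sqDev j i ω ∂M.P = 0 := by
  have hsq : Integrable (fun ω => M.Xc 0 j ω ^ 2) M.P :=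
    Integrable.of_integral_ne_zero (by rw [M.Xc_var j hj]; exact (M.lam_pos j hj).ne')
  rw [(M.identDistrib_sqDev j i).integral_eq]
  simp only [Model.sqDev]
  rw [integral_sub (hsq.div_const _) (integrable_const 1), integral_div, M.Xc_var j hj,
    div_self (M.lam_pos j hj).ne']
  simp

lemma Model.abs_sqDev_pow_le (M : Model) {j : ℕ} (hj : 1 ≤ j) (i m : ℕ) (ω : M.Ω) :
    |M.sqDev j i ω| ^ m ≤ |M.Xc i j ω / √(M.lam j)| ^ (2 * m) + 1 := by
  have : M.Xc i j ω ^ 2 / M.lam j = (M.Xc i j ω / √(M.lam j)) ^ 2 := by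
    rw [div_pow, Real.sq_sqrt (M.lam_pos j hj).le]
  rw [Model.sqDev, this]
  exact abs_sq_sub_one_pow_le _ m

lemma Model.integrable_abs_sqDev_pow (M : Model) {m : ℕ} {η : ℝ} (hX : M.momX (2 * m) η)
    {j : ℕ} (hj : 1 ≤ j) (i : ℕ) : Integrable (fun ω => |M.sqDev j i ω| ^ m) M.P := by
  have h0 : Integrable (fun ω => |M.sqDev j 0 ω| ^ m) M.P :=
    ((hX j hj).1.add (integrable_const 1)).mono'
      ((M.measurable_sqDev j 0).abs.pow_const m).aestronglyMeasurable
      (ae_of_all _ fun ω => by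
        rw [Real.norm_of_nonneg (by positivity)]
        exact M.abs_sqDev_pow_le hj 0 m ω)
  exact ((M.identDistrib_sqDev j i).comp (u := fun x => |x| ^ m) (by fun_prop)).integrable_iff.2 h0

lemma Model.integral_abs_sqDev_pow_le (M : Model) {m : ℕ} {η : ℝ} (hX : M.momX (2 * m) η)
    {j : ℕ} (hj : 1 ≤ j) (i : ℕ) : ∫ ω, |M.sqDev j i ω| ^ m ∂M.P ≤ η + 1 := by
  refine (((M.identDistrib_sqDev j i).comp (u := fun x => |x| ^ m) (by fun_prop)).integral_eq
    ).trans_le ?_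
  calc ∫ ω, |M.sqDev j 0 ω| ^ m ∂M.P
      ≤ ∫ ω, |M.Xc 0 j ω / √(M.lam j)| ^ (2 * m) + 1 ∂M.P :=
        integral_mono (M.integrable_abs_sqDev_pow hX hj 0)
          ((hX j hj).1.add (integrable_const 1)) (M.abs_sqDev_pow_le hj 0 m)
    _ ≤ η + 1 := by
        rw [integral_add (hX j hj).1 (integrable_const 1), integral_const]
        simpa using (hX j hj).2

lemma Model.lamhat_div_lam_sub_one (M : Model) {n : ℕ} (hn : n ≠ 0) (j : ℕ) (ω : M.Ω) :
    M.lamhat n j ω / M.lam j - 1 = (∑ i ∈ range n, M.sqDev j i ω) / n := by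
  simp only [Model.lamhat, Model.sqDev, sum_sub_distrib, ← sum_div, sum_const, card_range,
    nsmul_eq_mul, mul_one]
  field_simp

lemma Model.measureReal_half_le_abs_lamhat_div_lam_sub_one_le (M : Model) {k : ℕ} (hk : k ≠ 0)
    {η : ℝ} (hη : 1 ≤ η) (hX : M.momX (4 * k) η) {j : ℕ} (hj : 1 ≤ j) {n : ℕ} (hn : n ≠ 0) :
    M.P.real {ω | 1 / 2 ≤ |M.lamhat n j ω / M.lam j - 1|}
      ≤ 2 * 4 ^ k * k ^ (2 * k) * η / n ^ k := by
  have hX' : M.momX (2 * (2 * k)) η := by rwa [← mul_assoc]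
  have hnpos : (0 : ℝ) < n := by positivity
  set S := fun ω => ∑ i ∈ range n, M.sqDev j i ω
  have hmoment : ∫ ω, S ω ^ (2 * k) ∂M.P ≤ n ^ k * k ^ (2 * k) * (η + 1) := by
    simpa using (M.iIndepFun_sqDev j).integral_sum_pow_le
      (fun i => (M.measurable_sqDev j i).aemeasurable) (M.integral_sqDev hj) hk
      (M.integrable_abs_sqDev_pow hX' hj) (M.integral_abs_sqDev_pow_le hX' hj) (range n)
  have hevent : {ω | 1 / 2 ≤ |M.lamhat n j ω / M.lam j - 1|} ⊆ {ω | (n : ℝ) / 2 ≤ |S ω|} := by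
    intro ω hω
    simp only [Set.mem_ofPred_eq, M.lamhat_div_lam_sub_one hn, abs_div, Nat.abs_cast] at hω ⊢
    rwa [le_div_iff₀ hnpos, div_mul_eq_mul_div, one_mul] at hω
  calc M.P.real {ω | 1 / 2 ≤ |M.lamhat n j ω / M.lam j - 1|}
      ≤ M.P.real {ω | (n : ℝ) / 2 ≤ |S ω|} := measureReal_mono hevent
    _ ≤ (∫ ω, S ω ^ (2 * k) ∂M.P) / ((n : ℝ) / 2) ^ (2 * k) :=
        measureReal_le_abs_le_integral_pow_div (integrable_sum_pow
          (fun i => (M.measurable_sqDev j i).aestronglyMeasurable) (by omega)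
          (M.integrable_abs_sqDev_pow hX' hj) _) (by positivity)
    _ ≤ n ^ k * k ^ (2 * k) * (η + 1) / ((n : ℝ) / 2) ^ (2 * k) := by gcongr
    _ = 4 ^ k * k ^ (2 * k) * (η + 1) / n ^ k := by
        rw [div_pow, pow_mul' (n : ℝ), pow_mul (2 : ℝ)]
        field_simp
        norm_num
    _ ≤ 4 ^ k * k ^ (2 * k) * (2 * η) / n ^ k := by gcongr; linarith
    _ = 2 * 4 ^ k * k ^ (2 * k) * η / n ^ k := by ring

/-- Lemma A.4, bound (A.10): deviation probabilities for `λ̂_j/λ_j`. -/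
theorem statement14 :
    ∀ k : ℕ, 1 ≤ k → ∃ C : ℝ, 0 < C ∧
      ∀ (M : Model) (η w₁ w₂ : ℝ), 1 ≤ η → M.momX (4 * k) η → 2 ≤ w₁ → w₂ ≤ 1 / 2 →
        ∀ n : ℕ, 1 ≤ n →
          (∀ j : ℕ, 1 ≤ j →
            (M.P {ω | w₁ ≤ M.lamhat n j ω / M.lam j}).toReal ≤ C * η / (n : ℝ) ^ k) ∧
          (∀ j : ℕ, 1 ≤ j →
            (M.P {ω | M.lamhat n j ω / M.lam j < w₂}).toReal ≤ C * η / (n : ℝ) ^ k) := by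
  intro k hk
  refine ⟨2 * 4 ^ k * k ^ (2 * k), by positivity, fun M η w₁ w₂ hη hX hw₁ hw₂ n hn => ?_⟩
  have htail j (hj : 1 ≤ j) :=
    M.measureReal_half_le_abs_lamhat_div_lam_sub_one_le (by omega) hη hX hj (by omega : n ≠ 0)
  refine ⟨fun j hj => (measureReal_mono fun ω (hω : w₁ ≤ _) => ?_).trans (htail j hj),
    fun j hj => (measureReal_mono fun ω (hω : _ < w₂) => ?_).trans (htail j hj)⟩
  · exact le_abs.2 (.inl (by linarith : (1 : ℝ) / 2 ≤ M.lamhat n j ω / M.lam j - 1))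
  · exact le_abs.2 (.inr (by linarith : (1 : ℝ) / 2 ≤ -(M.lamhat n j ω / M.lam j - 1)))

end CircularFLM
end
end

section
/- Let k ≥ 1 and X ∈ 𝒳^{4k}_{η} with eigenvalues λ, and let M = (M_n) be a sequence with min_{1≤j≤M_n} λ_j ≥ 2/n for all n ≥ 1. Then there exists a numerical constant C_k > 0 depending only on k such that for all n ≥ 1: P( there exists j ∈ {1,…,M_n} with |λ_j/λ̂_j − 1| > 1/2 or λ̂_j < 1/n ) ≤ C_k·η·M_n·n^{−k}, where λ̂_j := n⁻¹Σ_{i=1}^n [Xᵢ]_j². -/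
open Filter Real

noncomputable section

namespace CircularFLM

open MeasureTheory ProbabilityTheory

/-! Fix `j ≤ M_n` and put `W_i = [X_i]_j² / λ_j - 1`. These are i.i.d. and centred,
`Σ_{i<n} W_i = n (λ̂_j / λ_j - 1)`, and when `λ_j ≥ 2/n` either failure forces
`|Σ_{i<n} W_i| ≥ n/3`. The moment condition on `X` gives `E W^{2k} ≤ η + 1`, and an inequality
of Marcinkiewicz–Zygmund type, `E (Σ_{i<n} W_i)^{2k} ≤ (2·4^k)^k n^k E W^{2k}`, turns Markov's
inequality into a bound of order `η n^{-k}` for each `j`; a union bound over `j` finishes. -/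

lemma pow_mul_pow_le_add {x y : ℝ} (hx : 0 ≤ x) (hy : 0 ≤ y) {j p : ℕ} (hj : j ≤ p) :
    x ^ j * y ^ (p + 2 - j) ≤ x ^ p * y ^ 2 + y ^ (p + 2) := by
  rcases le_total x y with hxy | hyx
  · calc x ^ j * y ^ (p + 2 - j) ≤ y ^ j * y ^ (p + 2 - j) := by gcongr
      _ = y ^ (p + 2) := by rw [← pow_add]; congr 1; omega
      _ ≤ x ^ p * y ^ 2 + y ^ (p + 2) := le_add_of_nonneg_left (by positivity)
  · calc x ^ j * y ^ (p + 2 - j) = x ^ j * y ^ (p - j) * y ^ 2 := by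
          rw [mul_assoc, ← pow_add]; congr 2; omega
      _ ≤ x ^ j * x ^ (p - j) * y ^ 2 := by gcongr
      _ = x ^ p * y ^ 2 := by rw [← pow_add]; congr 2; omega
      _ ≤ x ^ p * y ^ 2 + y ^ (p + 2) := le_add_of_nonneg_right (by positivity)

/-- Only the two top terms of the binomial expansion are kept exactly: after integration against
independent `s` and centred `w`, the linear term in `w` vanishes. -/
lemma add_pow_le (s w : ℝ) (m : ℕ) :
    (s + w) ^ (2 * m + 2) ≤ s ^ (2 * m + 2) + (2 * m + 2) * (s ^ (2 * m + 1) * w)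
      + 4 ^ (m + 1) * (s ^ (2 * m) * w ^ 2 + w ^ (2 * m + 2)) := by
  set R := s ^ (2 * m) * w ^ 2 + w ^ (2 * m + 2)
  have hterm : ∀ j ∈ Finset.range (2 * m + 1),
      s ^ j * w ^ (2 * m + 2 - j) * ((2 * m + 2).choose j : ℝ)
        ≤ ((2 * m + 2).choose j : ℝ) * R := by
    intro j hj
    have hj : j ≤ 2 * m := Nat.lt_succ_iff.mp (Finset.mem_range.mp hj)
    have h := pow_mul_pow_le_add (abs_nonneg s) (abs_nonneg w) hj
    have heven : |s| ^ (2 * m) * |w| ^ 2 + |w| ^ (2 * m + 2) = R := by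
      simp only [R, (even_two_mul m).pow_abs, even_two.pow_abs,
        (show Even (2 * m + 2) from ⟨m + 1, by ring⟩).pow_abs]
    rw [mul_comm]
    gcongr
    calc s ^ j * w ^ (2 * m + 2 - j) ≤ |s ^ j * w ^ (2 * m + 2 - j)| := le_abs_self _
      _ = |s| ^ j * |w| ^ (2 * m + 2 - j) := by rw [abs_mul, abs_pow, abs_pow]
      _ ≤ R := heven ▸ h
  have hchoose :
      (∑ j ∈ Finset.range (2 * m + 1), ((2 * m + 2).choose j : ℝ)) ≤ 4 ^ (m + 1) := by
    have h := Nat.sum_range_choose (2 * m + 2)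
    have hsub : ∑ j ∈ Finset.range (2 * m + 1), (2 * m + 2).choose j ≤ 2 ^ (2 * m + 2) :=
      h ▸ Finset.sum_le_sum_of_subset (Finset.range_subset_range.mpr (by omega))
    rw [show (4 : ℝ) ^ (m + 1) = 2 ^ (2 * m + 2) by
      rw [show 2 * m + 2 = 2 * (m + 1) by ring, pow_mul]; norm_num]
    exact_mod_cast hsub
  have hR : 0 ≤ R :=
    add_nonneg (mul_nonneg ((even_two_mul m).pow_nonneg s) (sq_nonneg w))
      ((show Even (2 * m + 2) from ⟨m + 1, by ring⟩).pow_nonneg w)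
  rw [add_pow, Finset.sum_range_succ, Finset.sum_range_succ]
  simp only [Nat.choose_self, Nat.choose_succ_self_right, Nat.sub_self,
    show 2 * m + 2 - (2 * m + 1) = 1 by omega, pow_zero, pow_one, mul_one, Nat.cast_one]
  have hsum := (Finset.sum_le_sum hterm).trans_eq (Finset.sum_mul _ _ R).symm
  push_cast at *
  linarith [mul_le_mul_of_nonneg_right hchoose hR]

lemma abs_sq_sub_one_pow_le (z : ℝ) (k : ℕ) : |z ^ 2 - 1| ^ (2 * k) ≤ |z| ^ (4 * k) + 1 := by
  rcases le_total (z ^ 2) 1 with hz | hz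
  · have : |z ^ 2 - 1| ≤ 1 := by rw [abs_le]; constructor <;> nlinarith
    have := pow_le_one₀ (abs_nonneg _) this (n := 2 * k)
    linarith [pow_nonneg (abs_nonneg z) (4 * k)]
  · have : |z ^ 2 - 1| ≤ |z| ^ 2 := by rw [sq_abs, abs_le]; constructor <;> linarith
    calc |z ^ 2 - 1| ^ (2 * k) ≤ (|z| ^ 2) ^ (2 * k) := by gcongr
      _ = |z| ^ (4 * k) := by rw [← pow_mul]; ring_nf
      _ ≤ |z| ^ (4 * k) + 1 := by linarith

lemma pow_succ_add_le {b x c : ℝ} (hb : 0 ≤ b) (hx : 0 ≤ x) {m : ℕ}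
    (hc : 2 * 4 ^ (m + 1) ≤ c) :
    (c * b * x) ^ (m + 1) + 4 ^ (m + 1) * ((c * b * x) ^ m * b + b ^ (m + 1))
      ≤ (c * b * (x + 1)) ^ (m + 1) := by
  have hc1 : 1 ≤ c := by
    linarith [one_le_pow₀ (M₀ := ℝ) (by norm_num : (1 : ℝ) ≤ 4) (n := m + 1)]
  have hbinom : x ^ (m + 1) + (x + 1) ^ m ≤ (x + 1) ^ (m + 1) := by
    rw [pow_succ, pow_succ]
    nlinarith [pow_le_pow_left₀ hx (le_add_of_nonneg_right zero_le_one : x ≤ x + 1) m]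
  have hlow : (c * x) ^ m + 1 ≤ 2 * (c * (x + 1)) ^ m := by
    have h1 : (c * x) ^ m ≤ (c * (x + 1)) ^ m := by gcongr; linarith
    have h2 : 1 ≤ (c * (x + 1)) ^ m := one_le_pow₀ (by nlinarith)
    linarith
  have key : (c * x) ^ (m + 1) + 4 ^ (m + 1) * ((c * x) ^ m + 1) ≤ (c * (x + 1)) ^ (m + 1) := by
    calc (c * x) ^ (m + 1) + 4 ^ (m + 1) * ((c * x) ^ m + 1)
        ≤ c ^ (m + 1) * x ^ (m + 1) + 4 ^ (m + 1) * (2 * (c * (x + 1)) ^ m) := by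
          rw [mul_pow]; gcongr
      _ = c ^ (m + 1) * x ^ (m + 1) + (2 * 4 ^ (m + 1)) * c ^ m * (x + 1) ^ m := by
          rw [mul_pow]; ring
      _ ≤ c ^ (m + 1) * x ^ (m + 1) + c * c ^ m * (x + 1) ^ m := by gcongr
      _ ≤ c ^ (m + 1) * (x + 1) ^ (m + 1) := by
          rw [← pow_succ']; nlinarith [pow_pos (by linarith : (0 : ℝ) < c) (m + 1)]
      _ = (c * (x + 1)) ^ (m + 1) := (mul_pow _ _ _).symm
  calc (c * b * x) ^ (m + 1) + 4 ^ (m + 1) * ((c * b * x) ^ m * b + b ^ (m + 1))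
      = b ^ (m + 1) * ((c * x) ^ (m + 1) + 4 ^ (m + 1) * ((c * x) ^ m + 1)) := by
        rw [mul_right_comm c b, mul_pow _ b, mul_pow _ b]; ring
    _ ≤ b ^ (m + 1) * (c * (x + 1)) ^ (m + 1) := by gcongr
    _ = (c * b * (x + 1)) ^ (m + 1) := by rw [mul_right_comm c b, mul_pow _ b]; ring

lemma third_le_abs_div_sub_one {l lh n : ℝ} (hn : 0 < n) (hl : 2 / n ≤ l)
    (h : 1 / 2 < |l / lh - 1| ∨ lh < 1 / n) : 1 / 3 ≤ |lh / l - 1| := by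
  have hl0 : 0 < l := lt_of_lt_of_le (by positivity) hl
  by_contra! hclose
  obtain ⟨hlo, hhi⟩ := abs_lt.mp hclose
  have hlo' : 2 / 3 * l < lh := by
    have := (lt_div_iff₀ hl0).mp (show 2 / 3 < lh / l by linarith); linarith
  have hhi' : lh < 4 / 3 * l := by
    have := (div_lt_iff₀ hl0).mp (show lh / l < 4 / 3 by linarith); linarith
  have hlh0 : 0 < lh := by linarith
  rcases h with h | h
  · have h1 : l / lh ≤ 3 / 2 := by rw [div_le_iff₀ hlh0]; linarith
    have h2 : 1 / 2 ≤ l / lh := by rw [le_div_iff₀ hlh0]; linarith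
    exact absurd h (not_lt.mpr (abs_le.mpr ⟨by linarith, by linarith⟩))
  · have : 2 / n * (2 / 3) < lh := by nlinarith
    have h3 : 2 / n * (2 / 3) = 4 / 3 * (1 / n) := by ring
    have h4 : 0 < 1 / n := by positivity
    linarith

section Moments

variable {Ω : Type*} [MeasurableSpace Ω] {P : Measure Ω}

lemma memLp_of_integrable_abs_pow {f : Ω → ℝ} {p : ℕ} (hp : p ≠ 0)
    (hf : AEStronglyMeasurable f P) (h : Integrable (fun ω => |f ω| ^ p) P) : MemLp f p P :=
  (integrable_norm_rpow_iff hf (by exact_mod_cast hp) (by simp)).mp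
    (by simpa [Real.norm_eq_abs, Real.rpow_natCast] using h)

variable [IsProbabilityMeasure P]

lemma integrable_pow_of_memLp {f : Ω → ℝ} {p a : ℕ} (hf : MemLp f p P) (ha : a ≤ p) :
    Integrable (fun ω => f ω ^ a) P := by
  have h := (hf.mono_exponent (by exact_mod_cast ha)).integrable_norm_pow' (p := a)
  exact (integrable_norm_iff (hf.1.pow a)).mp (by simpa [norm_pow] using h)

lemma integral_abs_pow_le_of_le {f : Ω → ℝ} {a b : ℕ} (hab : a ≤ b) (hf : MemLp f b P)
    {A : ℝ} (hA : 0 ≤ A) (hb : ∫ ω, |f ω| ^ b ∂P ≤ A ^ b) :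
    ∫ ω, |f ω| ^ a ∂P ≤ A ^ a := by
  rcases Nat.eq_zero_or_pos a with rfl | ha
  · simp
  have heLp : ∀ {p : ℕ}, 0 < p → MemLp f p P →
      eLpNorm f p P = ENNReal.ofReal ((∫ ω, |f ω| ^ p ∂P) ^ (p : ℝ)⁻¹) := by
    intro p hp hfp
    rw [hfp.eLpNorm_eq_integral_rpow_norm (by exact_mod_cast hp.ne') (by simp)]
    simp [Real.rpow_natCast]
  have hmono := eLpNorm_le_eLpNorm_of_exponent_le (μ := P) (p := a) (q := b)
    (by exact_mod_cast hab) hf.1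
  rw [heLp ha (hf.mono_exponent (by exact_mod_cast hab)), heLp (ha.trans_le hab) hf,
    ENNReal.ofReal_le_ofReal_iff (by positivity)] at hmono
  have hroot : (∫ ω, |f ω| ^ a ∂P) ^ (a : ℝ)⁻¹ ≤ A := by
    refine hmono.trans ?_
    calc (∫ ω, |f ω| ^ b ∂P) ^ (b : ℝ)⁻¹ ≤ (A ^ b) ^ (b : ℝ)⁻¹ := by gcongr
      _ = A := Real.pow_rpow_inv_natCast hA (by omega)
  calc ∫ ω, |f ω| ^ a ∂P = ((∫ ω, |f ω| ^ a ∂P) ^ (a : ℝ)⁻¹) ^ a :=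
        (Real.rpow_inv_natCast_pow (by positivity) ha.ne').symm
    _ ≤ A ^ a := by gcongr

lemma measureReal_abs_ge_le_integral_pow_div {f : Ω → ℝ} {p : ℕ}
    (hf : Integrable (fun ω => f ω ^ (2 * p)) P) {t : ℝ} (ht : 0 < t) :
    P.real {ω | t ≤ |f ω|} ≤ (∫ ω, f ω ^ (2 * p) ∂P) / t ^ (2 * p) := by
  have hsub : {ω | t ≤ |f ω|} ⊆ {ω | t ^ (2 * p) ≤ f ω ^ (2 * p)} :=
    fun ω (hω : t ≤ |f ω|) => show t ^ (2 * p) ≤ f ω ^ (2 * p) from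
      (even_two_mul p).pow_abs (f ω) ▸ pow_le_pow_left₀ ht.le hω _
  rw [le_div_iff₀ (by positivity), mul_comm]
  exact (mul_le_mul_of_nonneg_left (measureReal_mono hsub) (by positivity)).trans
    (mul_meas_ge_le_integral_of_nonneg
      (Eventually.of_forall fun ω => (even_two_mul p).pow_nonneg (f ω)) hf _)

lemma integral_add_pow_le {S W : Ω → ℝ} {m : ℕ} (hSW : IndepFun S W P)
    (hS : MemLp S (2 * m + 2 : ℕ) P) (hW : MemLp W (2 * m + 2 : ℕ) P)
    (hW0 : ∫ ω, W ω ∂P = 0) :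
    ∫ ω, (S ω + W ω) ^ (2 * m + 2) ∂P
      ≤ ∫ ω, S ω ^ (2 * m + 2) ∂P
        + 4 ^ (m + 1) * ((∫ ω, S ω ^ (2 * m) ∂P) * (∫ ω, W ω ^ 2 ∂P)
          + ∫ ω, W ω ^ (2 * m + 2) ∂P) := by
  have hS' := fun a (ha : a ≤ 2 * m + 2) => integrable_pow_of_memLp hS ha
  have hW' := fun a (ha : a ≤ 2 * m + 2) => integrable_pow_of_memLp hW ha
  have hind : ∀ a b : ℕ, IndepFun (fun ω => S ω ^ a) (fun ω => W ω ^ b) P := fun a b =>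
    hSW.comp (measurable_id.pow_const a) (measurable_id.pow_const b)
  have hprod : ∀ a b, a ≤ 2 * m + 2 → b ≤ 2 * m + 2 →
      Integrable (fun ω => S ω ^ a * W ω ^ b) P ∧
        ∫ ω, S ω ^ a * W ω ^ b ∂P = (∫ ω, S ω ^ a ∂P) * ∫ ω, W ω ^ b ∂P :=
    fun a b ha hb => ⟨(hind a b).integrable_mul (hS' a ha) (hW' b hb),
      (hind a b).integral_fun_mul_eq_mul_integral (hS' a ha).1 (hW' b hb).1⟩
  have hlin := hprod (2 * m + 1) 1 (by omega) (by omega)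
  have hquad := hprod (2 * m) 2 (by omega) (by omega)
  simp only [pow_one] at hlin
  have hsum : Integrable (fun ω => (S ω + W ω) ^ (2 * m + 2)) P :=
    integrable_pow_of_memLp (hS.add hW) le_rfl
  calc ∫ ω, (S ω + W ω) ^ (2 * m + 2) ∂P
      ≤ ∫ ω, S ω ^ (2 * m + 2) + (2 * m + 2) * (S ω ^ (2 * m + 1) * W ω)
          + 4 ^ (m + 1) * (S ω ^ (2 * m) * W ω ^ 2 + W ω ^ (2 * m + 2)) ∂P :=
        integral_mono hsum (((hS' _ le_rfl).fun_add (hlin.1.const_mul _)).fun_add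
          ((hquad.1.fun_add (hW' _ le_rfl)).const_mul _)) fun ω => add_pow_le (S ω) (W ω) m
    _ = _ := by
        rw [integral_add ((hS' _ le_rfl).fun_add (hlin.1.const_mul _))
            ((hquad.1.fun_add (hW' _ le_rfl)).const_mul _),
          integral_add (hS' _ le_rfl) (hlin.1.const_mul _), integral_const_mul,
          integral_const_mul, integral_add hquad.1 (hW' _ le_rfl), hlin.2, hquad.2, hW0]
        ring

/-- A moment inequality of Marcinkiewicz–Zygmund type, by induction on the number of summands,
simultaneously for all even moments up to `2k`. -/
theorem integral_sum_pow_le {W : ℕ → Ω → ℝ} {k : ℕ} {β : ℝ} (hβ : 0 ≤ β)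
    (hW : iIndepFun W P)
    (hLp : ∀ i, MemLp (W i) (2 * k : ℕ) P) (hcent : ∀ i, ∫ ω, W i ω ∂P = 0)
    (hmom : ∀ i, ∫ ω, W i ω ^ (2 * k) ∂P ≤ β ^ (2 * k)) (n : ℕ) :
    ∫ ω, (∑ i ∈ Finset.range n, W i ω) ^ (2 * k) ∂P ≤ (2 * 4 ^ k * β ^ 2 * n) ^ k := by
  have hmom' : ∀ i, ∀ m ≤ k, ∫ ω, W i ω ^ (2 * m) ∂P ≤ (β ^ 2) ^ m := by
    intro i m hm
    have h := integral_abs_pow_le_of_le (a := 2 * m) (by omega) (hLp i) hβ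
      (by simpa only [(even_two_mul k).pow_abs] using hmom i)
    simpa only [(even_two_mul m).pow_abs, ← pow_mul] using h
  have hLpSum : ∀ n, MemLp (fun ω => ∑ i ∈ Finset.range n, W i ω) (2 * k : ℕ) P :=
    fun n => memLp_finsetSum _ fun i _ => hLp i
  suffices h : ∀ n, ∀ m ≤ k,
      ∫ ω, (∑ i ∈ Finset.range n, W i ω) ^ (2 * m) ∂P ≤ (2 * 4 ^ k * β ^ 2 * n) ^ m
    from h n k le_rfl
  intro n
  induction n with
  | zero =>
    intro m hm
    rcases m with _ | m <;> simp
  | succ n ih =>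
    rintro (_ | m) hm
    · simp
    have hSW : IndepFun (fun ω => ∑ i ∈ Finset.range n, W i ω) (W n) P := by
      simpa [Finset.sum_fn] using hW.indepFun_finsetSum_of_notMem₀
        (fun i => (hLp i).1.aemeasurable) Finset.notMem_range_self
    have hc : 2 * 4 ^ (m + 1) ≤ (2 * 4 ^ k : ℝ) := by gcongr; norm_num
    have hexp : ((2 * m + 2 : ℕ) : ENNReal) ≤ (2 * k : ℕ) := Nat.cast_le.mpr (by omega)
    simp only [Finset.sum_range_succ]
    calc ∫ ω, (∑ i ∈ Finset.range n, W i ω + W n ω) ^ (2 * (m + 1)) ∂P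
        ≤ ∫ ω, (∑ i ∈ Finset.range n, W i ω) ^ (2 * m + 2) ∂P
          + 4 ^ (m + 1) * ((∫ ω, (∑ i ∈ Finset.range n, W i ω) ^ (2 * m) ∂P)
            * (∫ ω, W n ω ^ 2 ∂P) + ∫ ω, W n ω ^ (2 * m + 2) ∂P) :=
          integral_add_pow_le hSW ((hLpSum n).mono_exponent hexp) ((hLp n).mono_exponent hexp)
            (hcent n)
      _ ≤ (2 * 4 ^ k * β ^ 2 * n) ^ (m + 1)
          + 4 ^ (m + 1) * ((2 * 4 ^ k * β ^ 2 * n) ^ m * β ^ 2 + (β ^ 2) ^ (m + 1)) := by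
          gcongr
          · exact ih (m + 1) hm
          · exact ih m (by omega)
          · simpa using hmom' n 1 (by omega)
          · exact hmom' n (m + 1) hm
      _ ≤ (2 * 4 ^ k * β ^ 2 * (n + 1 : ℕ)) ^ (m + 1) := by
          push_cast; exact pow_succ_add_le (sq_nonneg β) n.cast_nonneg hc

end Moments

namespace Model

variable (M : Model)

lemma identDistrib_sample (i : ℕ) :
    IdentDistrib (fun ω => (M.eps i ω, fun j => M.Xc i j ω))
      (fun ω => (M.eps 0 ω, fun j => M.Xc 0 j ω)) M.P M.P where
  aemeasurable_fst :=
    ((M.meas_eps i).prodMk (measurable_pi_lambda _ fun j => M.meas_Xc i j)).aemeasurable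
  aemeasurable_snd :=
    ((M.meas_eps 0).prodMk (measurable_pi_lambda _ fun j => M.meas_Xc 0 j)).aemeasurable
  map_eq := M.iid_ident i

lemma integrable_Xc_sq {j : ℕ} (hj : 1 ≤ j) : Integrable (fun ω => M.Xc 0 j ω ^ 2) M.P := by
  by_contra h
  exact (M.lam_pos j hj).ne (integral_undef h ▸ M.Xc_var j hj)

def lamhatFail (n j : ℕ) : Set M.Ω :=
  {ω | 1 / 2 < |M.lam j / M.lamhat n j ω - 1| ∨ M.lamhat n j ω < 1 / (n : ℝ)}

def sqDev_s16 (j i : ℕ) (ω : M.Ω) : ℝ := M.Xc i j ω ^ 2 / M.lam j - 1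

lemma sum_sqDev (n j : ℕ) (ω : M.Ω) :
    ∑ i ∈ Finset.range n, M.sqDev_s16 j i ω = n * (M.lamhat n j ω / M.lam j - 1) := by
  rcases n.eq_zero_or_pos with rfl | hn
  · simp
  simp only [sqDev_s16, lamhat]
  rw [Finset.sum_sub_distrib, ← Finset.sum_div, Finset.sum_const, Finset.card_range,
    nsmul_eq_mul, mul_one]
  field_simp

lemma measurable_sqDev_s16 (j i : ℕ) : Measurable (M.sqDev_s16 j i) :=
  (((M.meas_Xc i j).pow_const 2).div_const _).sub_const 1

lemma iIndepFun_sqDev_s16 (j : ℕ) : iIndepFun (M.sqDev_s16 j) M.P :=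
  M.iid_indep.comp (fun _ p => p.2 j ^ 2 / M.lam j - 1) fun _ => by fun_prop

lemma identDistrib_sqDev_s16 (j i : ℕ) : IdentDistrib (M.sqDev_s16 j i) (M.sqDev_s16 j 0) M.P M.P :=
  (M.identDistrib_sample i).comp (u := fun p : ℝ × (ℕ → ℝ) => p.2 j ^ 2 / M.lam j - 1)
    (by fun_prop)

lemma integral_sqDev_s16 {j : ℕ} (hj : 1 ≤ j) : ∫ ω, M.sqDev_s16 j 0 ω ∂M.P = 0 := by
  simp only [sqDev_s16]
  rw [integral_sub ((M.integrable_Xc_sq hj).div_const _) (integrable_const 1), integral_div,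
    M.Xc_var j hj, div_self (M.lam_pos j hj).ne']
  simp

lemma abs_sqDev_pow_le_s16 {j : ℕ} (hj : 1 ≤ j) (k : ℕ) (ω : M.Ω) :
    |M.sqDev_s16 j 0 ω| ^ (2 * k) ≤ |M.Xc 0 j ω / √(M.lam j)| ^ (4 * k) + 1 := by
  have h : M.sqDev_s16 j 0 ω = (M.Xc 0 j ω / √(M.lam j)) ^ 2 - 1 := by
    rw [sqDev_s16, div_pow, Real.sq_sqrt (M.lam_pos j hj).le]
  exact h ▸ abs_sq_sub_one_pow_le _ k

lemma integrable_abs_sqDev_pow_s16 {k : ℕ} {η : ℝ} (hX : M.momX (4 * k) η) {j : ℕ}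
    (hj : 1 ≤ j) :
    Integrable (fun ω => |M.sqDev_s16 j 0 ω| ^ (2 * k)) M.P :=
  ((hX j hj).1.add (integrable_const 1)).mono'
    ((M.measurable_sqDev_s16 j 0).abs.pow_const _).aestronglyMeasurable
    (ae_of_all _ fun ω => by
      rw [Real.norm_of_nonneg (by positivity)]; exact M.abs_sqDev_pow_le_s16 hj k ω)

lemma integral_sqDev_pow_le {k : ℕ} {η : ℝ} (hX : M.momX (4 * k) η) {j : ℕ} (hj : 1 ≤ j) :
    ∫ ω, M.sqDev_s16 j 0 ω ^ (2 * k) ∂M.P ≤ η + 1 := by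
  calc ∫ ω, M.sqDev_s16 j 0 ω ^ (2 * k) ∂M.P = ∫ ω, |M.sqDev_s16 j 0 ω| ^ (2 * k) ∂M.P := by
        simp_rw [(even_two_mul k).pow_abs]
    _ ≤ ∫ ω, |M.Xc 0 j ω / √(M.lam j)| ^ (4 * k) + 1 ∂M.P :=
        integral_mono (M.integrable_abs_sqDev_pow_s16 hX hj) ((hX j hj).1.add (integrable_const 1))
          (M.abs_sqDev_pow_le_s16 hj k)
    _ ≤ η + 1 := by
        rw [integral_add (hX j hj).1 (integrable_const 1)]
        simpa using (hX j hj).2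

lemma lamhatFail_subset {n j : ℕ} (hn : 1 ≤ n) (hlam : 2 / (n : ℝ) ≤ M.lam j) :
    M.lamhatFail n j ⊆ {ω | (n : ℝ) / 3 ≤ |∑ i ∈ Finset.range n, M.sqDev_s16 j i ω|} :=
  fun ω hω => by
    have hn0 : (0 : ℝ) < n := by exact_mod_cast hn
    have h := third_le_abs_div_sub_one hn0 hlam hω
    show (n : ℝ) / 3 ≤ |∑ i ∈ Finset.range n, M.sqDev_s16 j i ω|
    rw [sum_sqDev, abs_mul, Nat.abs_cast]
    nlinarith

lemma measureReal_lamhatFail_le {k : ℕ} (hk : 1 ≤ k) {η : ℝ} (hη : 1 ≤ η)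
    (hX : M.momX (4 * k) η) {n j : ℕ} (hn : 1 ≤ n) (hj : 1 ≤ j)
    (hlam : 2 / (n : ℝ) ≤ M.lam j) :
    M.P.real (M.lamhatFail n j) ≤ (18 * 4 ^ k) ^ k * (2 * η) / (n : ℝ) ^ k := by
  set β : ℝ := (η + 1) ^ ((2 * k : ℕ) : ℝ)⁻¹
  have hβ : β ^ (2 * k) = η + 1 := Real.rpow_inv_natCast_pow (by linarith) (by omega)
  have hLp : ∀ i, MemLp (M.sqDev_s16 j i) (2 * k : ℕ) M.P := fun i =>
    (M.identDistrib_sqDev_s16 j i).memLp_iff.mpr <| memLp_of_integrable_abs_pow (by omega)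
      (M.measurable_sqDev_s16 j 0).aestronglyMeasurable (M.integrable_abs_sqDev_pow_s16 hX hj)
  have hmoment := integral_sum_pow_le (by positivity) (M.iIndepFun_sqDev_s16 j)
    hLp
    (fun i => (M.identDistrib_sqDev_s16 j i).integral_eq.trans (M.integral_sqDev_s16 hj))
    (fun i => hβ ▸ (M.identDistrib_sqDev_s16 j i).pow.integral_eq.trans_le
      (M.integral_sqDev_pow_le hX hj)) n
  calc M.P.real (M.lamhatFail n j)
      ≤ M.P.real {ω | (n : ℝ) / 3 ≤ |∑ i ∈ Finset.range n, M.sqDev_s16 j i ω|} :=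
        measureReal_mono (M.lamhatFail_subset hn hlam)
    _ ≤ (∫ ω, (∑ i ∈ Finset.range n, M.sqDev_s16 j i ω) ^ (2 * k) ∂M.P)
          / ((n : ℝ) / 3) ^ (2 * k) :=
        measureReal_abs_ge_le_integral_pow_div
          (integrable_pow_of_memLp (memLp_finsetSum _ fun i _ => hLp i) le_rfl) (by positivity)
    _ ≤ (2 * 4 ^ k * β ^ 2 * n) ^ k / ((n : ℝ) / 3) ^ (2 * k) := by gcongr
    _ = (18 * 4 ^ k * β ^ 2 / n) ^ k := by
        rw [pow_mul, ← div_pow]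
        congr 1
        field_simp
        ring
    _ = (18 * 4 ^ k) ^ k * (η + 1) / (n : ℝ) ^ k := by rw [div_pow, mul_pow, ← pow_mul, hβ]
    _ ≤ (18 * 4 ^ k) ^ k * (2 * η) / (n : ℝ) ^ k := by
        gcongr
        linarith

end Model

/-- Lemma A.5, bound (A.12): uniform control of the estimated eigenvalues up to `M_n`. -/
theorem statement16 :
    ∀ k : ℕ, 1 ≤ k → ∃ C : ℝ, 0 < C ∧
      ∀ (M : Model) (η : ℝ) (Ms : ℕ → ℕ), 1 ≤ η → M.momX (4 * k) η →
        (∀ n : ℕ, 1 ≤ n → ∀ j : ℕ, 1 ≤ j → j ≤ Ms n → 2 / (n : ℝ) ≤ M.lam j) →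
        ∀ n : ℕ, 1 ≤ n →
          (M.P {ω | ∃ j : ℕ, 1 ≤ j ∧ j ≤ Ms n ∧
              (1 / 2 < |M.lam j / M.lamhat n j ω - 1| ∨ M.lamhat n j ω < 1 / (n : ℝ))}).toReal
            ≤ C * η * (Ms n : ℝ) / (n : ℝ) ^ k := by
  intro k hk
  refine ⟨2 * (18 * 4 ^ k) ^ k, by positivity, fun M η Ms hη hX hlam n hn => ?_⟩
  have hunion : {ω | ∃ j : ℕ, 1 ≤ j ∧ j ≤ Ms n ∧
      (1 / 2 < |M.lam j / M.lamhat n j ω - 1| ∨ M.lamhat n j ω < 1 / (n : ℝ))}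
      = ⋃ j ∈ Finset.Icc 1 (Ms n), M.lamhatFail n j := by
    ext ω
    simp [Model.lamhatFail, and_assoc]
  rw [← measureReal_def, hunion]
  calc _ ≤ ∑ j ∈ Finset.Icc 1 (Ms n), M.P.real (M.lamhatFail n j) :=
        measureReal_biUnion_finset_le _ _
    _ ≤ ∑ _j ∈ Finset.Icc 1 (Ms n), (18 * 4 ^ k) ^ k * (2 * η) / (n : ℝ) ^ k :=
        Finset.sum_le_sum fun j hj =>
          have ⟨hj1, hjM⟩ := Finset.mem_Icc.mp hj
          M.measureReal_lamhatFail_le hk hη hX hn hj1 (hlam n hn j hj1 hjM)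
    _ = 2 * (18 * 4 ^ k) ^ k * η * (Ms n : ℝ) / (n : ℝ) ^ k := by
        rw [Finset.sum_const, Nat.card_Icc, nsmul_eq_mul]
        simp only [add_tsub_cancel_right]
        ring

end CircularFLM
end
end

section
/- Let λ = (λ_j) be a strictly positive sequence and ω = (ω_j) a strictly positive sequence, and define the intrinsic sequences Δ_m := max_{1≤j≤m} ω_j/λ_j, κ_m := max_{1≤j≤m} max(ω_j,1)/λ_j and δ_m := m·Δ_m·log(max(κ_m, m+2))/log(m+2). Then for every m ≥ 1: Δ_m·exp(−δ_m/(6Δ_m)) ≤ exp( −m·( 1/6 − log(m+2)/m )·log(max(κ_m, m+2))/log(m+2) ), and consequently Σ_{m≥1} Δ_m·exp(−δ_m/(6Δ_m)) < ∞; in particular there exists Σ > 0 such that the intrinsic sequences δ and Δ satisfy the summability condition Σ_{m≥1} Δ_m·exp(−δ_m/(6Δ_m)) ≤ Σ. -/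
open Filter Real

noncomputable section

namespace CircularFLM

open MeasureTheory ProbabilityTheory

/-! Since `Δ_m ≤ κ_m ∨ (m+2)`, the `m`-th term is at most `exp (-(m/6 - log (m+2)) r_m)` with
`r_m = log (κ_m ∨ (m+2)) / log (m+2) ≥ 1`; once `log (m+2) ≤ m/6` this is at most
`(m+2) e^{-m/6}`, a summable majorant. -/

lemma le_maxIcc (f : ℕ → ℝ) {m j : ℕ} (h1 : 1 ≤ j) (h2 : j ≤ m) : f j ≤ maxIcc f m :=
  le_csSup ((Set.finite_Icc 1 m).image f).bddAbove ⟨j, ⟨h1, h2⟩, rfl⟩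

lemma maxIcc_le {f : ℕ → ℝ} {m : ℕ} (hm : 1 ≤ m) {c : ℝ}
    (h : ∀ j, 1 ≤ j → j ≤ m → f j ≤ c) : maxIcc f m ≤ c :=
  csSup_le ⟨f 1, 1, ⟨le_rfl, hm⟩, rfl⟩ fun _ ⟨j, ⟨h1, h2⟩, hj⟩ => hj ▸ h j h1 h2

lemma intrinsicDelta_pos {lam w : ℕ → ℝ} (hlam : ∀ j, 1 ≤ j → 0 < lam j)
    (hw : ∀ j, 1 ≤ j → 0 < w j) {m : ℕ} (hm : 1 ≤ m) : 0 < intrinsicDelta lam w m :=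
  (div_pos (hw 1 le_rfl) (hlam 1 le_rfl)).trans_le (le_maxIcc (fun j => w j / lam j) le_rfl hm)

lemma intrinsicDelta_le_intrinsicKappa {lam : ℕ → ℝ} (w : ℕ → ℝ)
    (hlam : ∀ j, 1 ≤ j → 0 ≤ lam j) {m : ℕ} (hm : 1 ≤ m) :
    intrinsicDelta lam w m ≤ intrinsicKappa lam w m :=
  maxIcc_le hm fun j h1 h2 =>
    (div_le_div_of_nonneg_right (le_max_left (w j) 1) (hlam j h1)).trans
      (le_maxIcc (fun j => max (w j) 1 / lam j) h1 h2)

/-- With `r = log (κ ∨ (x+2)) / log (x+2)`, the right-hand side is `(κ ∨ (x+2)) * exp (-(x r / 6))`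
and the left-hand side is `D * exp (-(x r / 6))`. -/
lemma mul_exp_neg_div_six_le {x D κ : ℝ} (hx : 0 < x) (hDκ : D ≤ κ) :
    D * exp (-(x * D * (log (max κ (x + 2)) / log (x + 2))) / (6 * D))
      ≤ exp (-(x * (1 / 6 - log (x + 2) / x) * (log (max κ (x + 2)) / log (x + 2)))) := by
  set L := max κ (x + 2)
  set r := log L / log (x + 2)
  have hlog : log (x + 2) ≠ 0 := (log_pos (by linarith)).ne'
  have hL : 0 < L := lt_max_of_lt_right (by linarith)
  rcases eq_or_ne D 0 with rfl | hD
  · simpa using exp_nonneg _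
  have hleft : -(x * D * r) / (6 * D) = -(x * r / 6) := by field_simp
  have hright : -(x * (1 / 6 - log (x + 2) / x) * r) = log L + -(x * r / 6) := by
    simp only [r]
    field_simp
    ring
  rw [hleft, hright, exp_add, exp_log hL]
  exact mul_le_mul_of_nonneg_right (hDκ.trans (le_max_left _ _)) (exp_nonneg _)

lemma log_add_two_le_div_six {x : ℝ} (hx : 72 ≤ x) : log (x + 2) ≤ x / 6 := by
  rw [log_le_iff_le_exp (by linarith)]
  nlinarith [quadratic_le_exp_of_nonneg (show 0 ≤ x / 6 by linarith)]

lemma exp_neg_mul_sub_log_div_le {x r : ℝ} (hx : 72 ≤ x) (hr : 1 ≤ r) :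
    exp (-(x * (1 / 6 - log (x + 2) / x) * r)) ≤ (x + 2) * exp (-(1 / 6) * x) := by
  have hexponent : x * (1 / 6 - log (x + 2) / x) = x / 6 - log (x + 2) := by
    field_simp
  have hgap : 0 ≤ x / 6 - log (x + 2) := by linarith [log_add_two_le_div_six hx]
  calc exp (-(x * (1 / 6 - log (x + 2) / x) * r))
      ≤ exp (log (x + 2) + -(1 / 6) * x) := by
        rw [hexponent]
        gcongr
        nlinarith
    _ = (x + 2) * exp (-(1 / 6) * x) := by rw [exp_add, exp_log (by linarith)]

lemma summable_add_mul_exp_neg_nat_mul (a : ℝ) {r : ℝ} (hr : 0 < r) :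
    Summable fun n : ℕ => ((n : ℝ) + a) * exp (-r * n) := by
  simpa [add_mul] using
    (summable_pow_mul_exp_neg_nat_mul 1 hr).add ((summable_pow_mul_exp_neg_nat_mul 0 hr).mul_left a)

/-- The intrinsic sequences `δ` and `Δ` always satisfy the summability condition of
Assumption 2. -/
theorem statement18 (lam w : ℕ → ℝ) (hlam : ∀ j, 1 ≤ j → 0 < lam j)
    (hw : ∀ j, 1 ≤ j → 0 < w j) :
    (∀ m : ℕ, 1 ≤ m →
      intrinsicDelta lam w m
          * Real.exp (-intrinsicdelta lam w m / (6 * intrinsicDelta lam w m))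
        ≤ Real.exp (-((m : ℝ) * ((1 : ℝ) / 6 - Real.log ((m : ℝ) + 2) / (m : ℝ))
            * (Real.log (max (intrinsicKappa lam w m) ((m : ℝ) + 2))
              / Real.log ((m : ℝ) + 2))))) ∧
    Summable (fun m : ℕ => intrinsicDelta lam w (m + 1)
      * Real.exp (-intrinsicdelta lam w (m + 1) / (6 * intrinsicDelta lam w (m + 1)))) ∧
    ∃ Sig : ℝ, 0 < Sig ∧
      (∑' m : ℕ, intrinsicDelta lam w (m + 1)
        * Real.exp (-intrinsicdelta lam w (m + 1) / (6 * intrinsicDelta lam w (m + 1))))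
        ≤ Sig := by
  have hbound : ∀ m : ℕ, 1 ≤ m → intrinsicDelta lam w m
        * exp (-intrinsicdelta lam w m / (6 * intrinsicDelta lam w m))
      ≤ exp (-((m : ℝ) * (1 / 6 - log ((m : ℝ) + 2) / m)
          * (log (max (intrinsicKappa lam w m) ((m : ℝ) + 2)) / log ((m : ℝ) + 2)))) :=
    fun m hm => mul_exp_neg_div_six_le (by positivity)
      (intrinsicDelta_le_intrinsicKappa w (fun j hj => (hlam j hj).le) hm)
  have hsummable : Summable fun m : ℕ => intrinsicDelta lam w m
      * exp (-intrinsicdelta lam w m / (6 * intrinsicDelta lam w m)) := by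
    refine (summable_add_mul_exp_neg_nat_mul 2 (by norm_num : (0 : ℝ) < 1 / 6))
      |>.of_norm_bounded_eventually_nat ?_
    filter_upwards [eventually_ge_atTop 72] with m hm
    have hm1 : 1 ≤ m := by omega
    rw [Real.norm_of_nonneg (mul_nonneg (intrinsicDelta_pos hlam hw hm1).le (exp_nonneg _))]
    refine (hbound m hm1).trans (exp_neg_mul_sub_log_div_le (by exact_mod_cast hm) ?_)
    exact (one_le_div (log_pos (by linarith))).mpr
      (log_le_log (by positivity) (le_max_right _ _))
  refine ⟨hbound, (summable_nat_add_iff 1).mpr hsummable, _, lt_max_of_lt_right one_pos,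
    le_max_left _ 1⟩

end CircularFLM
end
end
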